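/- arXiv:1804.09338 — 2 statements merged into one kernel-verified Lean document; each statement's English description precedes it below -/
import Mathlib

section
/- Let G = (V,E) be a graph with n vertices and let G' be the split graph with vertex set V^1 ∪ V ∪ E (V^1 a copy of V), edges making V a clique, pendant-style edges v_i v_i', and edges ve for v incident to e. If G' admits a Roman {2}-dominating function of weight at most 2k + (n − k) with k ≤ n, then G has a vertex cover of size at most k. -/
/-!
Let `f` be a Roman {2}-dominating function on the split graph `G'`. A copy vertex `v'` has `v`
as its only neighbour, so `f v' + f v ≥ 1`, and `≥ 2` as soon as `f v > 0`. Hence the weight of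
`f` is at least `n + |A| + |B|`, where `A ⊆ V` and `B ⊆ E` are the vertices of positive weight. An
edge-vertex `e ∉ B` has weight `0`, so it has a neighbour, i.e. an endpoint, in `A`; therefore
`A` together with one endpoint of each edge in `B` is a vertex cover of `G`, of size at most
`|A| + |B| ≤ 2k + (n - k) - n = k`.
-/

open scoped Classical
open Finset

open scoped Classical in
noncomputable def nbrSum {V : Type*} [Fintype V] (G : SimpleGraph V) (f : V → ℕ) (v : V) : ℕ :=
  ∑ u ∈ Finset.univ.filter (fun u => G.Adj v u), f u

def IsR2DF {V : Type*} [Fintype V] (G : SimpleGraph V) (f : V → ℕ) : Prop :=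
  (∀ v, f v ≤ 2) ∧ ∀ v, f v = 0 → 2 ≤ nbrSum G f v

/-- Vertices of the split graph `G'`: a copy `V¹` of `V` (left), the original
vertices `V`, and one vertex for each edge of `G`. -/
abbrev SplitVert {V : Type*} (G : SimpleGraph V) : Type _ :=
  V ⊕ V ⊕ {e : Sym2 V // e ∈ G.edgeSet}

/-- One-directional relation generating the split graph: `V` is a clique, each copy
vertex `vᵢ'` is joined to `vᵢ`, and each edge-vertex is joined to its two endpoints. -/
def splitRel {V : Type*} (G : SimpleGraph V) : SplitVert G → SplitVert G → Prop
  | .inl a, .inr (.inl b) => a = b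
  | .inr (.inl _), .inr (.inl _) => True
  | .inr (.inl a), .inr (.inr e) => a ∈ (e : Sym2 V)
  | _, _ => False

/-- The split graph `G'` constructed from `G`. -/
def splitGraph {V : Type*} (G : SimpleGraph V) : SimpleGraph (SplitVert G) :=
  SimpleGraph.fromRel (splitRel G)

namespace IsR2DF

variable {W : Type*} [Fintype W] {H : SimpleGraph W} {f : W → ℕ}

lemma exists_adj_pos (hf : IsR2DF H f) {v : W} (hv : f v = 0) : ∃ u, H.Adj v u ∧ 0 < f u := by
  have hsum : nbrSum H f v ≠ 0 := by have := hf.2 v hv; omega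
  obtain ⟨u, hu, hfu⟩ := Finset.exists_ne_zero_of_sum_ne_zero hsum
  exact ⟨u, (Finset.mem_filter.mp hu).2, Nat.pos_of_ne_zero hfu⟩

lemma one_add_ite_pos_le_of_adj_iff (hf : IsR2DF H f) {v u : W} (hv : ∀ w, H.Adj v w ↔ w = u) :
    1 + (if 0 < f u then 1 else 0) ≤ f v + f u := by
  have hnbr : nbrSum H f v = f u := by
    rw [nbrSum, Finset.filter_congr (fun w _ => hv w), Finset.filter_eq' _ u]
    simp
  have hpendant : f v = 0 → 2 ≤ f u := fun hfv => hnbr ▸ hf.2 v hfv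
  split <;> omega

end IsR2DF

section splitGraph

variable {V : Type*} (G : SimpleGraph V)

lemma splitGraph_adj_inl_iff (v : V) (w : SplitVert G) :
    (splitGraph G).Adj (.inl v) w ↔ w = .inr (.inl v) := by
  rcases w with a | a | e <;>
    simp [splitGraph, SimpleGraph.fromRel_adj, splitRel, eq_comm]

lemma splitGraph_adj_edge_iff (e : G.edgeSet) (w : SplitVert G) :
    (splitGraph G).Adj (.inr (.inr e)) w ↔ ∃ a ∈ (e : Sym2 V), w = .inr (.inl a) := by
  rcases w with a | a | e' <;>
    simp [splitGraph, SimpleGraph.fromRel_adj, splitRel]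

variable [Fintype V]

noncomputable def coverOfR2DF (f : SplitVert G → ℕ) : Finset V :=
  ({v | 0 < f (.inr (.inl v))} : Finset V) ∪
    ({e | 0 < f (.inr (.inr e))} : Finset G.edgeSet).image fun e => e.1.out.1

lemma card_coverOfR2DF_le (f : SplitVert G → ℕ) :
    #(coverOfR2DF G f) ≤
      #{v | 0 < f (.inr (.inl v))} + #({e | 0 < f (.inr (.inr e))} : Finset G.edgeSet) :=
  (Finset.card_union_le _ _).trans (Nat.add_le_add_left Finset.card_image_le _)

variable {G} {f : SplitVert G → ℕ}

lemma IsR2DF.card_add_card_add_card_le_sum_splitGraph (hf : IsR2DF (splitGraph G) f) :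
    Fintype.card V + #{v | 0 < f (.inr (.inl v))} +
      #({e | 0 < f (.inr (.inr e))} : Finset G.edgeSet) ≤ ∑ x, f x := by
  have hcopies : Fintype.card V + #{v | 0 < f (.inr (.inl v))} ≤
      ∑ v, f (.inl v) + ∑ v, f (.inr (.inl v)) :=
    calc Fintype.card V + #{v | 0 < f (.inr (.inl v))}
        = ∑ v : V, (1 + if 0 < f (.inr (.inl v)) then 1 else 0) := by
          rw [Finset.sum_add_distrib, Finset.card_filter]; simp
      _ ≤ ∑ v : V, (f (.inl v) + f (.inr (.inl v))) :=
          Finset.sum_le_sum fun v _ =>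
            hf.one_add_ite_pos_le_of_adj_iff (splitGraph_adj_inl_iff G v)
      _ = _ := Finset.sum_add_distrib
  have hedges : #({e | 0 < f (.inr (.inr e))} : Finset G.edgeSet) ≤
      ∑ e, f (.inr (.inr e)) := by
    rw [Finset.card_filter]
    exact Finset.sum_le_sum fun e _ => by split <;> omega
  rw [Fintype.sum_sum_type, Fintype.sum_sum_type]
  omega

lemma IsR2DF.isVertexCover_coverOfR2DF (hf : IsR2DF (splitGraph G) f) :
    G.IsVertexCover (coverOfR2DF G f) := by
  intro a b hab
  let e : G.edgeSet := ⟨s(a, b), hab⟩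
  have mem_ab {c : V} (hc : c ∈ s(a, b)) (hC : c ∈ coverOfR2DF G f) :
      a ∈ (coverOfR2DF G f : Set V) ∨ b ∈ (coverOfR2DF G f : Set V) := by
    rcases Sym2.mem_iff.mp hc with rfl | rfl <;> simp [hC]
  by_cases hfe : f (.inr (.inr e)) = 0
  · obtain ⟨w, hew, hfw⟩ := hf.exists_adj_pos hfe
    obtain ⟨c, hc, rfl⟩ := (splitGraph_adj_edge_iff G e w).mp hew
    exact mem_ab hc (Finset.mem_union_left _ (by simpa using hfw))
  · refine mem_ab (Sym2.out_fst_mem _)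
      (Finset.mem_union_right _ (Finset.mem_image.mpr ⟨e, ?_, rfl⟩))
    exact Finset.mem_filter.mpr ⟨Finset.mem_univ _, Nat.pos_of_ne_zero hfe⟩

end splitGraph

theorem stmt_3 {V : Type*} [Fintype V] (G : SimpleGraph V) (k : ℕ) (hk : k ≤ Fintype.card V)
    (h : ∃ f : SplitVert G → ℕ, IsR2DF (splitGraph G) f ∧
      ∑ x, f x ≤ 2 * k + (Fintype.card V - k)) :
    ∃ C : Set V, (∀ ⦃a b : V⦄, G.Adj a b → a ∈ C ∨ b ∈ C) ∧ C.ncard ≤ k := by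
  obtain ⟨f, hf, hweight⟩ := h
  refine ⟨coverOfR2DF G f, hf.isVertexCover_coverOfR2DF, ?_⟩
  have hlower := hf.card_add_card_add_card_le_sum_splitGraph
  have hcover := card_coverOfR2DF_le G f
  rw [Set.ncard_coe_finset]
  omega
end

section
/- Let G be a graph with vertex cover number τ(G) and let G' be the split graph constructed from G (copy V^1 of V, clique on V, edges v_i v_i', and edges from each e ∈ E to its two endpoints). Then γ_{R2}(G') = n + τ(G), where n = |V(G)|. -/
/-!
A vertex cover `C` gives the R2DF putting `2` on the clique vertices of `C` and `1` on the pendant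
copies of the other vertices: an edge-vertex sees a covering endpoint, and a clique vertex outside
`C` sees any vertex of `C`, which exists because `G` has an edge. Conversely, in an R2DF each pair
`{vᵢ', vᵢ}` carries weight at least `1`, and at least `2` when `vᵢ` is positive. The positive
clique vertices, together with one endpoint of each positive edge-vertex, cover `G`, since an
edge-vertex of weight `0` needs a positive endpoint; so `τ(G)` is at most the surplus over `n`.
-/

open scoped Classical
open Finset

/-- The Roman {2}-domination number. -/
noncomputable def gammaR2 {W : Type*} [Fintype W] (H : SimpleGraph W) : ℕ :=
  sInf {w | ∃ f : W → ℕ, IsR2DF H f ∧ w = ∑ v, f v}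

/-- The vertex cover number. -/
noncomputable def tau {V : Type*} [Fintype V] (G : SimpleGraph V) : ℕ :=
  sInf {k | ∃ C : Set V, (∀ ⦃a b : V⦄, G.Adj a b → a ∈ C ∨ b ∈ C) ∧ C.ncard = k}

def IsVertexCover {V : Type*} (G : SimpleGraph V) (C : Set V) : Prop :=
  ∀ ⦃a b : V⦄, G.Adj a b → a ∈ C ∨ b ∈ C

section Extremal

variable {V W : Type*} [Fintype V] [Fintype W]

lemma tau_le_ncard {G : SimpleGraph V} {C : Set V} (hC : IsVertexCover G C) : tau G ≤ C.ncard :=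
  Nat.sInf_le ⟨C, hC, rfl⟩

lemma exists_isVertexCover_ncard_eq_tau (G : SimpleGraph V) :
    ∃ C, IsVertexCover G C ∧ C.ncard = tau G :=
  Nat.sInf_mem (s := {k | ∃ C : Set V, IsVertexCover G C ∧ C.ncard = k})
    ⟨_, Set.univ, fun _ _ _ => Or.inl trivial, rfl⟩

lemma gammaR2_le_sum {H : SimpleGraph W} {f : W → ℕ} (hf : IsR2DF H f) :
    gammaR2 H ≤ ∑ v, f v :=
  Nat.sInf_le ⟨f, hf, rfl⟩

lemma exists_isR2DF_sum_eq_gammaR2 (H : SimpleGraph W) :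
    ∃ f, IsR2DF H f ∧ ∑ v, f v = gammaR2 H := by
  have hconst : IsR2DF H fun _ => 2 := ⟨fun _ => le_rfl, fun _ h => absurd h two_ne_zero⟩
  obtain ⟨f, hf, hsum⟩ := Nat.sInf_mem (s := {w | ∃ f : W → ℕ, IsR2DF H f ∧ w = ∑ v, f v})
    ⟨_, _, hconst, rfl⟩
  exact ⟨f, hf, hsum.symm⟩

lemma le_nbrSum_of_adj {H : SimpleGraph W} (f : W → ℕ) {v u : W} (h : H.Adj v u) :
    f u ≤ nbrSum H f v :=
  Finset.single_le_sum (fun _ _ => Nat.zero_le _) (Finset.mem_filter.mpr ⟨Finset.mem_univ _, h⟩)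

end Extremal

lemma IsVertexCover.nonempty {V : Type*} {G : SimpleGraph V} {C : Set V} (hC : IsVertexCover G C)
    (hE : ∃ a b, G.Adj a b) : C.Nonempty := by
  obtain ⟨a, b, hab⟩ := hE
  rcases hC hab with h | h
  exacts [⟨a, h⟩, ⟨b, h⟩]

namespace SplitGraph

variable {V : Type*} {G : SimpleGraph V}

lemma adj_copy_iff (a : V) (u : SplitVert G) :
    (splitGraph G).Adj (.inl a) u ↔ u = .inr (.inl a) := by
  rcases u with b | b | e <;> simp [splitGraph, splitRel, eq_comm]

lemma adj_edge_iff {a b : V} (h : G.Adj a b) (u : SplitVert G) :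
    (splitGraph G).Adj (.inr (.inr ⟨s(a, b), G.mem_edgeSet.mpr h⟩)) u ↔
      u = .inr (.inl a) ∨ u = .inr (.inl b) := by
  rcases u with c | c | e <;> simp [splitGraph, splitRel, Sym2.mem_iff]

lemma adj_clique {a b : V} (hab : a ≠ b) :
    (splitGraph G).Adj (.inr (.inl a)) (.inr (.inl b)) := by
  simp [splitGraph, splitRel, hab]

lemma adj_edge_of_mem {a : V} {e : G.edgeSet} (ha : a ∈ (e : Sym2 V)) :
    (splitGraph G).Adj (.inr (.inr e)) (.inr (.inl a)) := by
  simp [splitGraph, splitRel, ha]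

variable [Fintype V]

lemma nbrSum_copy (f : SplitVert G → ℕ) (a : V) :
    nbrSum (splitGraph G) f (.inl a) = f (.inr (.inl a)) := by
  have : Finset.univ.filter (fun u => (splitGraph G).Adj (.inl a) u) = {.inr (.inl a)} := by
    ext u; simp [adj_copy_iff]
  rw [nbrSum, this, Finset.sum_singleton]

lemma nbrSum_edge (f : SplitVert G → ℕ) {a b : V} (h : G.Adj a b) :
    nbrSum (splitGraph G) f (.inr (.inr ⟨s(a, b), G.mem_edgeSet.mpr h⟩)) =
      f (.inr (.inl a)) + f (.inr (.inl b)) := by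
  have : Finset.univ.filter
      (fun u => (splitGraph G).Adj (.inr (.inr ⟨s(a, b), G.mem_edgeSet.mpr h⟩)) u) =
      {.inr (.inl a), .inr (.inl b)} := by
    ext u; simp [adj_edge_iff h]
  rw [nbrSum, this, Finset.sum_pair (by simp [h.ne])]

noncomputable def coverWeight (G : SimpleGraph V) (C : Set V) : SplitVert G → ℕ
  | .inl a => if a ∈ C then 0 else 1
  | .inr (.inl a) => if a ∈ C then 2 else 0
  | .inr (.inr _) => 0

lemma sum_coverWeight (C : Set V) : ∑ v, coverWeight G C v = Fintype.card V + C.ncard := by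
  have hpair : ∀ a, coverWeight G C (.inl a) + coverWeight G C (.inr (.inl a)) =
      1 + if a ∈ C.toFinset then 1 else 0 := by
    intro a
    by_cases ha : a ∈ C <;> simp [coverWeight, ha]
  have hedge : ∑ e : G.edgeSet, coverWeight G C (.inr (.inr e)) = 0 :=
    Finset.sum_eq_zero fun _ _ => rfl
  rw [Fintype.sum_sum_type, Fintype.sum_sum_type, hedge, add_zero, ← Finset.sum_add_distrib,
    Finset.sum_congr rfl fun a _ => hpair a, Finset.sum_add_distrib, Finset.sum_ite_mem,
    Finset.univ_inter, Set.ncard_eq_toFinset_card']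
  simp

lemma isR2DF_coverWeight {C : Set V} (hC : IsVertexCover G C) (hne : C.Nonempty) :
    IsR2DF (splitGraph G) (coverWeight G C) := by
  refine ⟨by rintro (a | a | e) <;> simp [coverWeight, apply_ite (· ≤ 2)], ?_⟩
  rintro (a | a | ⟨e, he⟩) h0
  · have ha : a ∈ C := by by_contra ha; simp [coverWeight, ha] at h0
    rw [nbrSum_copy]
    simp [coverWeight, ha]
  · have ha : a ∉ C := by intro ha; simp [coverWeight, ha] at h0
    obtain ⟨u, hu⟩ := hne
    calc 2 = coverWeight G C (.inr (.inl u)) := by simp [coverWeight, hu]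
      _ ≤ _ := le_nbrSum_of_adj _ (adj_clique fun h : a = u => ha (h ▸ hu))
  · induction e using Sym2.inductionOn with
    | hf a b =>
      obtain ⟨c, hc, hcC⟩ : ∃ c ∈ s(a, b), c ∈ C := by
        rcases hC (G.mem_edgeSet.mp he) with h | h
        exacts [⟨a, by simp, h⟩, ⟨b, by simp, h⟩]
      calc 2 = coverWeight G C (.inr (.inl c)) := by simp [coverWeight, hcC]
        _ ≤ _ := le_nbrSum_of_adj _ (adj_edge_of_mem (e := ⟨s(a, b), he⟩) hc)

section LowerBound

variable {f : SplitVert G → ℕ}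

lemma one_add_ite_le_of_isR2DF (hf : IsR2DF (splitGraph G) f) (a : V) :
    1 + (if 1 ≤ f (.inr (.inl a)) then 1 else 0) ≤ f (.inl a) + f (.inr (.inl a)) := by
  have hcopy : f (.inl a) = 0 → 2 ≤ f (.inr (.inl a)) := fun h0 => nbrSum_copy f a ▸ hf.2 _ h0
  split_ifs <;> omega

lemma isVertexCover_of_isR2DF (hf : IsR2DF (splitGraph G) f) :
    IsVertexCover G ↑(Finset.univ.filter (fun a => 1 ≤ f (.inr (.inl a))) ∪
      (Finset.univ.filter (fun e : {e : Sym2 V // e ∈ G.edgeSet} => 1 ≤ f (.inr (.inr e)))).image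
        (fun e => e.1.out.1)) := by
  intro a b hab
  simp only [Finset.coe_union, Set.mem_union, Finset.mem_coe, Finset.mem_filter, Finset.mem_image,
    Finset.mem_univ, true_and]
  by_cases he : 1 ≤ f (.inr (.inr ⟨s(a, b), G.mem_edgeSet.mpr hab⟩))
  · have hout : (s(a, b)).out.1 = a ∨ (s(a, b)).out.1 = b := Sym2.mem_iff.mp (Sym2.out_fst_mem _)
    rcases hout with h | h
    exacts [Or.inl (Or.inr ⟨_, he, h⟩), Or.inr (Or.inr ⟨_, he, h⟩)]
  · have := nbrSum_edge f hab ▸ hf.2 _ (by omega)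
    omega

lemma card_add_tau_le_sum (hf : IsR2DF (splitGraph G) f) : Fintype.card V + tau G ≤ ∑ v, f v := by
  set C := Finset.univ.filter (fun a => 1 ≤ f (.inr (.inl a)))
  set E := Finset.univ.filter (fun e : {e : Sym2 V // e ∈ G.edgeSet} => 1 ≤ f (.inr (.inr e)))
  have hτ : tau G ≤ #C + #E := calc
    tau G ≤ #(C ∪ E.image fun e => e.1.out.1) :=
      (tau_le_ncard (isVertexCover_of_isR2DF hf)).trans_eq (Set.ncard_coe_finset _)
    _ ≤ #C + #E := (Finset.card_union_le _ _).trans (by gcongr; exact Finset.card_image_le)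
  have hCV : Fintype.card V + #C ≤ ∑ a, (f (.inl a) + f (.inr (.inl a))) := calc
    Fintype.card V + #C = ∑ a, (1 + if 1 ≤ f (.inr (.inl a)) then 1 else 0) := by
      rw [Finset.sum_add_distrib, ← Finset.card_filter]; simp [C]
    _ ≤ _ := Finset.sum_le_sum fun a _ => one_add_ite_le_of_isR2DF hf a
  have hE : #E ≤ ∑ e : {e : Sym2 V // e ∈ G.edgeSet}, f (.inr (.inr e)) := calc
    #E = ∑ e : {e : Sym2 V // e ∈ G.edgeSet}, if 1 ≤ f (.inr (.inr e)) then 1 else 0 :=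
      Finset.card_filter _ _
    _ ≤ _ := Finset.sum_le_sum fun e _ => by split_ifs <;> omega
  simp only [Fintype.sum_sum_type, Finset.sum_add_distrib] at hCV ⊢
  omega

end LowerBound

end SplitGraph

open SplitGraph in
theorem stmt_19 {V : Type*} [Fintype V] (G : SimpleGraph V) (hE : ∃ a b, G.Adj a b) :
    gammaR2 (splitGraph G) = Fintype.card V + tau G := by
  apply le_antisymm
  · obtain ⟨C, hC, hCcard⟩ := exists_isVertexCover_ncard_eq_tau G
    calc gammaR2 (splitGraph G) ≤ ∑ v, coverWeight G C v :=
          gammaR2_le_sum (isR2DF_coverWeight hC (hC.nonempty hE))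
      _ = Fintype.card V + tau G := by rw [sum_coverWeight, hCcard]
  · obtain ⟨f, hf, hsum⟩ := exists_isR2DF_sum_eq_gammaR2 (splitGraph G)
    exact hsum ▸ card_add_tau_le_sum hf
end
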